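/- Let d ≥ 1, let G_1,…,G_d̄ be a partition of {1,…,d} into nonempty disjoint groups, let α ∈ ℝ^d̄ have strictly positive entries, and let p, q, s, t ∈ [1,∞] satisfy 1/p + 1/q = 1 and 1/s + 1/t = 1. Fix β ∈ ℝ^d with β ≠ 0, e ∈ ℝ, and γ > 0, and consider V := e² + sup_{Δ ∈ ℝ^d} { (Δᵀβ)² − 2e·(Δᵀβ) − γ‖Δ‖_{α⁻¹-(q,t)}² } ∈ [0,∞]. Then: (i) if γ > ‖β‖_{α-(p,s)}², then V = e²·γ / (γ − ‖β‖_{α-(p,s)}²); (ii) if γ < ‖β‖_{α-(p,s)}², then V = +∞; (iii) if γ = ‖β‖_{α-(p,s)}² and e ≠ 0, then V = +∞. -/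

import Mathlib

open scoped ENNReal BigOperators
open MeasureTheory Filter

/-- The l_p norm (p ∈ [1,∞], with sup modification at p = ∞) of a finite real vector. -/
noncomputable def lpn (p : ℝ≥0∞) {ι : Type} [Fintype ι] (x : ι → ℝ) : ℝ :=
  ‖(WithLp.equiv p (ι → ℝ)).symm x‖

/-- The α-(p,s) groupwise norm: ‖x‖ = ( Σ_i α_i^s ‖x(G_i)‖_p^s )^{1/s}. -/
noncomputable def gnorm {d dbar : ℕ} (G : Fin dbar → Finset (Fin d)) (α : Fin dbar → ℝ)
    (p s : ℝ≥0∞) (x : Fin d → ℝ) : ℝ :=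
  lpn s (fun i => α i * lpn p (fun j : {k // k ∈ G i} => x j.1))

/-- G_1, …, G_d̄ form a partition of {1,…,d} into nonempty disjoint groups. -/
def IsPartition {d dbar : ℕ} (G : Fin dbar → Finset (Fin d)) : Prop :=
  (∀ i, (G i).Nonempty) ∧ (∀ i j, i ≠ j → Disjoint (G i) (G j)) ∧ (∀ k, ∃ i, k ∈ G i)

/-!
Hölder's inequality, applied inside each group with exponents `(p, q)` and across the groups
with `(s, t)`, shows that the `α⁻¹-(q,t)` norm `N` is dual to the `α-(p,s)` norm:
`|Δᵀβ| ≤ N(Δ) ‖β‖`, with equality for some `Δ` with `N(Δ) ≤ 1`. Writing `B = ‖β‖`, the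
supremum therefore only depends on `n = N(Δ)` (the sign of `Δᵀβ` is chosen opposite to `e`)
and equals `sup_n (2|e|B|n| - (γ - B²) n²)`. This one-dimensional quadratic has maximum
`e²B²/(γ - B²)` when `γ > B²`, and is unbounded when `γ < B²` or when `γ = B²` and `eB ≠ 0`.
-/

namespace ENNReal.HolderConjugate

variable (p q : ℝ≥0∞) [p.HolderConjugate q]

lemma trichotomy :
    (p = 1 ∧ q = ∞) ∨ (p = ∞ ∧ q = 1) ∨ p.toReal.HolderConjugate q.toReal := by
  by_cases hp : p = ∞
  · exact Or.inr (Or.inl ⟨hp, (eq_top_iff_eq_one p q).1 hp⟩)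
  by_cases hq : q = ∞
  · exact Or.inl ⟨(eq_top_iff_eq_one q p).1 hq, hq⟩
  refine Or.inr (Or.inr ?_)
  have := HolderTriple.toReal (p := p) (q := q) 1
    (ENNReal.toReal_pos (ne_zero p q) hp) (ENNReal.toReal_pos (ne_zero q p) hq)
  simpa using this

end ENNReal.HolderConjugate

section lpn

variable {ι : Type} [Fintype ι] {p q : ℝ≥0∞}

lemma lpn_nonneg [Fact (1 ≤ p)] (x : ι → ℝ) : 0 ≤ lpn p x := norm_nonneg _

lemma lpn_neg [Fact (1 ≤ p)] (x : ι → ℝ) : lpn p (-x) = lpn p x := norm_neg _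

lemma lpn_smul [Fact (1 ≤ p)] (c : ℝ) (x : ι → ℝ) : lpn p (c • x) = |c| * lpn p x :=
  norm_smul c _

lemma lpn_le_lpn_of_abs_le [Fact (1 ≤ p)] {x y : ι → ℝ} (h : ∀ i, |x i| ≤ |y i|) :
    lpn p x ≤ lpn p y := by
  rcases p.dichotomy with rfl | hp
  · simp only [lpn, PiLp.norm_eq_ciSup]
    exact ciSup_mono (Set.finite_range _).bddAbove h
  · have hp0 : 0 < p.toReal := by linarith
    simp only [lpn, PiLp.norm_eq_sum hp0]
    gcongr with i
    exact h i

lemma lpn_eq_sum (hp : 0 < p.toReal) (x : ι → ℝ) :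
    lpn p x = (∑ i, |x i| ^ p.toReal) ^ (1 / p.toReal) := by
  simp [lpn, PiLp.norm_eq_sum hp]

lemma lpn_one_eq (x : ι → ℝ) : lpn 1 x = ∑ i, |x i| := by
  simp [lpn, PiLp.norm_eq_of_L1]

lemma abs_le_lpn_top (x : ι → ℝ) (i : ι) : |x i| ≤ lpn ∞ x :=
  PiLp.norm_apply_le (WithLp.toLp ∞ x) i

lemma lpn_top_le {x : ι → ℝ} {c : ℝ} (hc : 0 ≤ c) (h : ∀ i, |x i| ≤ c) : lpn ∞ x ≤ c := by
  simp only [lpn, PiLp.norm_eq_ciSup]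
  exact Real.iSup_le h hc

lemma sum_mul_le_lpn_top_mul_lpn_one (x y : ι → ℝ) : ∑ i, x i * y i ≤ lpn ∞ x * lpn 1 y :=
  calc ∑ i, x i * y i ≤ ∑ i, |x i| * |y i| :=
        Finset.sum_le_sum fun i _ => (le_abs_self _).trans (abs_mul _ _).le
    _ ≤ ∑ i, lpn ∞ x * |y i| := by gcongr with i; exact abs_le_lpn_top x i
    _ = lpn ∞ x * lpn 1 y := by rw [← Finset.mul_sum, lpn_one_eq]

lemma sum_mul_le_lpn_mul_lpn [p.HolderConjugate q] (x y : ι → ℝ) :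
    ∑ i, x i * y i ≤ lpn q x * lpn p y := by
  rcases ENNReal.HolderConjugate.trichotomy p q with ⟨rfl, rfl⟩ | ⟨rfl, rfl⟩ | hpq
  · exact sum_mul_le_lpn_top_mul_lpn_one x y
  · simpa only [mul_comm] using sum_mul_le_lpn_top_mul_lpn_one y x
  · rw [lpn_eq_sum hpq.symm.pos, lpn_eq_sum hpq.pos]
    exact Real.inner_le_Lp_mul_Lq _ x y hpq.symm

lemma abs_sum_mul_le_lpn_mul_lpn [p.HolderConjugate q] (x y : ι → ℝ) :
    |∑ i, x i * y i| ≤ lpn q x * lpn p y := by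
  have : Fact (1 ≤ q) := ⟨ENNReal.HolderConjugate.one_le q p⟩
  refine abs_le.2 ⟨?_, sum_mul_le_lpn_mul_lpn x y⟩
  have := sum_mul_le_lpn_mul_lpn (p := p) (q := q) (-x) y
  simp only [Pi.neg_apply, neg_mul, Finset.sum_neg_distrib, lpn_neg] at this
  linarith

lemma exists_lpn_le_one_sum_mul_eq_of_nonneg [p.HolderConjugate q] {y : ι → ℝ}
    (hy : ∀ i, 0 ≤ y i) : ∃ x : ι → ℝ, lpn q x ≤ 1 ∧ ∑ i, x i * y i = lpn p y := by
  have : Fact (1 ≤ p) := ⟨ENNReal.HolderConjugate.one_le p q⟩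
  have : Fact (1 ≤ q) := ⟨ENNReal.HolderConjugate.one_le q p⟩
  cases isEmpty_or_nonempty ι
  · exact ⟨0, by simp [lpn], by simp [lpn, Subsingleton.elim y 0]⟩
  rcases ENNReal.HolderConjugate.trichotomy p q with ⟨rfl, rfl⟩ | ⟨rfl, rfl⟩ | hpq
  · refine ⟨1, lpn_top_le zero_le_one fun i => by simp, ?_⟩
    simp [lpn_one_eq, abs_of_nonneg (hy _)]
  · classical
    obtain ⟨i₀, hi₀⟩ := exists_eq_ciSup_of_finite (f := fun i => |y i|)
    refine ⟨Pi.single i₀ 1, by simp [lpn_one_eq, Pi.single_apply, apply_ite], ?_⟩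
    simp only [lpn, PiLp.norm_eq_ciSup]
    simpa [Pi.single_apply, abs_of_nonneg (hy _)] using hi₀
  · obtain ⟨⟨g, hg, hgy⟩, -⟩ :=
      NNReal.isGreatest_Lp Finset.univ (fun i => (y i).toNNReal) hpq
    refine ⟨fun i => g i, ?_, ?_⟩
    · have : ∑ i, (g i : ℝ) ^ q.toReal ≤ 1 := by exact_mod_cast hg
      rw [lpn_eq_sum hpq.symm.pos]
      simp only [NNReal.abs_eq]
      exact Real.rpow_le_one (by positivity) this (by simp [hpq.symm.nonneg])
    · have := congrArg ((↑) : NNReal → ℝ) hgy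
      push_cast [Real.coe_toNNReal _ (hy _)] at this
      simp only [lpn_eq_sum hpq.pos, abs_of_nonneg (hy _), ← this, mul_comm]

lemma exists_lpn_le_one_sum_mul_eq [p.HolderConjugate q] (y : ι → ℝ) :
    ∃ x : ι → ℝ, lpn q x ≤ 1 ∧ ∑ i, x i * y i = lpn p y := by
  have : Fact (1 ≤ p) := ⟨ENNReal.HolderConjugate.one_le p q⟩
  have : Fact (1 ≤ q) := ⟨ENNReal.HolderConjugate.one_le q p⟩
  obtain ⟨x, hx, hxy⟩ := exists_lpn_le_one_sum_mul_eq_of_nonneg (p := p) (q := q)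
    (y := fun i => |y i|) fun i => abs_nonneg _
  refine ⟨fun i => SignType.sign (y i) * x i, ?_, ?_⟩
  · refine le_trans (lpn_le_lpn_of_abs_le fun i => ?_) hx
    rw [abs_mul]
    refine mul_le_of_le_one_left (abs_nonneg _) ?_
    rcases SignType.sign (y i) with _ | _ | _ <;> simp
  · have habs : lpn p (fun i => |y i|) = lpn p y :=
      le_antisymm (lpn_le_lpn_of_abs_le fun i => (abs_abs _).le)
        (lpn_le_lpn_of_abs_le fun i => (abs_abs _).ge)
    rw [← habs, ← hxy]
    refine Finset.sum_congr rfl fun i _ => ?_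
    rw [← sign_mul_self (y i)]
    ring

end lpn

namespace IsPartition

variable {d dbar : ℕ} {G : Fin dbar → Finset (Fin d)}

noncomputable def sigmaEquiv (hG : IsPartition G) : (Σ i, {k // k ∈ G i}) ≃ Fin d :=
  Equiv.ofBijective (fun x => x.2.1)
    ⟨fun x y (hxy : x.2.1 = y.2.1) => by
      have hi : x.1 = y.1 := by
        by_contra hne
        exact Finset.disjoint_left.1 (hG.2.1 _ _ hne) x.2.2 (hxy ▸ y.2.2)
      exact Sigma.subtype_ext hi hxy,
    fun k => let ⟨i, hi⟩ := hG.2.2 k; ⟨⟨i, k, hi⟩, rfl⟩⟩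

lemma sigmaEquiv_symm_apply (hG : IsPartition G) {i : Fin dbar} (j : {k // k ∈ G i}) :
    hG.sigmaEquiv.symm j = ⟨i, j⟩ :=
  hG.sigmaEquiv.symm_apply_eq.2 rfl

lemma sum_eq_sum_sum (hG : IsPartition G) (f : Fin d → ℝ) :
    ∑ k, f k = ∑ i, ∑ j : {k // k ∈ G i}, f j := by
  rw [← hG.sigmaEquiv.sum_comp, Fintype.sum_sigma]
  rfl

end IsPartition

section gnorm

variable {d dbar : ℕ} {G : Fin dbar → Finset (Fin d)} {α : Fin dbar → ℝ} {p q s t : ℝ≥0∞}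

lemma gnorm_nonneg [Fact (1 ≤ s)] (x : Fin d → ℝ) : 0 ≤ gnorm G α p s x := lpn_nonneg _

lemma gnorm_smul [Fact (1 ≤ p)] [Fact (1 ≤ s)] (c : ℝ) (x : Fin d → ℝ) :
    gnorm G α p s (c • x) = |c| * gnorm G α p s x := by
  have h : (fun i => α i * lpn p (fun j : {k // k ∈ G i} => (c • x) j.1)) =
      |c| • fun i => α i * lpn p (fun j : {k // k ∈ G i} => x j.1) := by
    ext i
    simp only [Pi.smul_apply, smul_eq_mul]
    rw [show (fun j : {k // k ∈ G i} => c * x j.1) = c • fun j => x j.1 from rfl, lpn_smul]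
    ring
  rw [gnorm, h, lpn_smul, abs_abs, gnorm]

lemma abs_sum_mul_le_gnorm_mul_gnorm (hG : IsPartition G) (hα : ∀ i, α i ≠ 0)
    [p.HolderConjugate q] [s.HolderConjugate t] (x y : Fin d → ℝ) :
    |∑ k, x k * y k| ≤ gnorm G (fun i => (α i)⁻¹) q t x * gnorm G α p s y := by
  rw [hG.sum_eq_sum_sum]
  calc |∑ i, ∑ j : {k // k ∈ G i}, x j * y j|
      ≤ ∑ i, |∑ j : {k // k ∈ G i}, x j * y j| := Finset.abs_sum_le_sum_abs _ _
    _ ≤ ∑ i, ((α i)⁻¹ * lpn q (fun j : {k // k ∈ G i} => x j)) *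
          (α i * lpn p (fun j : {k // k ∈ G i} => y j)) := by
        gcongr with i
        rw [mul_mul_mul_comm, inv_mul_cancel₀ (hα i), one_mul]
        exact abs_sum_mul_le_lpn_mul_lpn _ _
    _ ≤ _ := sum_mul_le_lpn_mul_lpn _ _

lemma exists_gnorm_le_one_sum_mul_eq (hG : IsPartition G) (hα : ∀ i, α i ≠ 0)
    [p.HolderConjugate q] [s.HolderConjugate t] (y : Fin d → ℝ) :
    ∃ x : Fin d → ℝ, gnorm G (fun i => (α i)⁻¹) q t x ≤ 1 ∧
      ∑ k, x k * y k = gnorm G α p s y := by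
  have : Fact (1 ≤ q) := ⟨ENNReal.HolderConjugate.one_le q p⟩
  have : Fact (1 ≤ t) := ⟨ENNReal.HolderConjugate.one_le t s⟩
  obtain ⟨u, hu, huy⟩ := exists_lpn_le_one_sum_mul_eq (p := s) (q := t)
    (fun i => α i * lpn p (fun j : {k // k ∈ G i} => y j))
  choose v hv hvy using fun i => exists_lpn_le_one_sum_mul_eq (p := p) (q := q)
    (fun j : {k // k ∈ G i} => y j)
  -- `u` attains the outer norm, `v i` the inner norm on the group `G i`
  let F : (Σ i, {k // k ∈ G i}) → ℝ := fun ij => α ij.1 * u ij.1 * v ij.1 ij.2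
  let x : Fin d → ℝ := F ∘ hG.sigmaEquiv.symm
  have hx (i : Fin dbar) : (fun j : {k // k ∈ G i} => x j) = (α i * u i) • v i := by
    ext j
    change F (hG.sigmaEquiv.symm j) = _
    rw [hG.sigmaEquiv_symm_apply]
    rfl
  refine ⟨x, le_trans (lpn_le_lpn_of_abs_le fun i => ?_) hu, ?_⟩
  · have : |(α i)⁻¹ * (|α i * u i| * lpn q (v i))| = |u i| * lpn q (v i) := by
      rw [abs_mul, abs_mul, abs_abs, abs_mul, abs_of_nonneg (lpn_nonneg _), abs_inv]
      field_simp [abs_ne_zero.2 (hα i)]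
    rw [hx, lpn_smul, this]
    exact mul_le_of_le_one_right (abs_nonneg _) (hv i)
  · rw [hG.sum_eq_sum_sum, gnorm, ← huy]
    refine Finset.sum_congr rfl fun i _ => ?_
    rw [← hvy i, Finset.mul_sum, Finset.mul_sum]
    refine Finset.sum_congr rfl fun j _ => ?_
    rw [show x j = α i * u i * v i j from congrFun (hx i) j]
    ring

end gnorm

section quadratic

lemma iSup_ofReal_eq_top_of_tendsto {X : Type*} {l : Filter X} [l.NeBot] {f : X → ℝ}
    (hf : Tendsto f l atTop) : ⨆ x, ENNReal.ofReal (f x) = ⊤ :=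
  iSup_eq_top.2 fun b hb =>
    let ⟨x, hx⟩ := (hf.eventually_gt_atTop b.toReal).exists
    ⟨x, (ENNReal.lt_ofReal_iff_toReal_lt hb.ne).2 hx⟩

variable {a k : ℝ}

lemma iSup_ofReal_two_mul_abs_sub_mul_sq_of_pos (ha : 0 ≤ a) (hk : 0 < k) :
    ⨆ c : ℝ, ENNReal.ofReal (2 * a * |c| - k * c ^ 2) = ENNReal.ofReal (a ^ 2 / k) := by
  refine le_antisymm (iSup_le fun c => ENNReal.ofReal_le_ofReal ?_) ?_
  · rw [le_div_iff₀ hk, ← sq_abs c]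
    nlinarith [sq_nonneg (k * |c| - a)]
  · refine le_iSup_of_le (a / k) (ENNReal.ofReal_le_ofReal (le_of_eq ?_))
    rw [abs_of_nonneg (div_nonneg ha hk.le)]
    field_simp
    ring

lemma iSup_ofReal_two_mul_abs_sub_mul_sq_of_neg (ha : 0 ≤ a) (hk : k < 0) :
    ⨆ c : ℝ, ENNReal.ofReal (2 * a * |c| - k * c ^ 2) = ⊤ := by
  refine iSup_ofReal_eq_top_of_tendsto (l := atTop) (tendsto_atTop_mono (fun c => ?_)
    ((tendsto_pow_atTop two_ne_zero).const_mul_atTop (neg_pos.2 hk)))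
  nlinarith [abs_nonneg c]

lemma iSup_ofReal_two_mul_abs_sub_mul_sq_of_nonpos (ha : 0 < a) (hk : k ≤ 0) :
    ⨆ c : ℝ, ENNReal.ofReal (2 * a * |c| - k * c ^ 2) = ⊤ := by
  refine iSup_ofReal_eq_top_of_tendsto (l := atTop) (tendsto_atTop_mono (fun c => ?_)
    (tendsto_id.const_mul_atTop (by positivity : 0 < 2 * a)))
  rw [id]
  nlinarith [le_abs_self c, mul_nonpos_of_nonpos_of_nonneg hk (sq_nonneg c)]

lemma iSup_ofReal_sq_sub_eq_iSup_ofReal_abs {X : Type*} {L N : X → ℝ} {B e γ : ℝ}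
    (hγ : 0 ≤ γ) (hN : ∀ x, 0 ≤ N x) (hL : ∀ x, |L x| ≤ B * N x)
    (hattain : ∀ c, ∃ x, L x = c * B ∧ N x ≤ |c|) :
    ⨆ x, ENNReal.ofReal (L x ^ 2 - 2 * e * L x - γ * N x ^ 2) =
      ⨆ c : ℝ, ENNReal.ofReal (2 * (|e| * B) * |c| - (γ - B ^ 2) * c ^ 2) := by
  refine le_antisymm (iSup_le fun x => le_iSup_of_le (N x) (ENNReal.ofReal_le_ofReal ?_))
    (iSup_le fun c => ?_)
  · have hsq : L x ^ 2 ≤ (B * N x) ^ 2 := sq_le_sq.2 ((hL x).trans (le_abs_self _))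
    have hlin : -(e * L x) ≤ |e| * (B * N x) :=
      (neg_le_abs _).trans ((abs_mul _ _).trans_le (by gcongr; exact hL x))
    rw [abs_of_nonneg (hN x)]
    nlinarith
  · obtain ⟨x, hxL, hxN⟩ := hattain (if e ≤ 0 then |c| else -|c|)
    refine le_iSup_of_le x (ENNReal.ofReal_le_ofReal ?_)
    have hN2 : N x ^ 2 ≤ c ^ 2 := by
      rw [← sq_abs c]
      exact pow_le_pow_left₀ (hN x) (hxN.trans_eq (by split_ifs <;> simp)) 2
    rw [hxL]
    split_ifs with he
    · rw [abs_of_nonpos he]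
      nlinarith [sq_abs c, mul_le_mul_of_nonneg_left hN2 hγ]
    · rw [abs_of_pos (not_le.1 he)]
      nlinarith [sq_abs c, mul_le_mul_of_nonneg_left hN2 hγ]

end quadratic

lemma iSup_ofReal_gnorm_eq {d dbar : ℕ} {G : Fin dbar → Finset (Fin d)} {α : Fin dbar → ℝ}
    {p q s t : ℝ≥0∞} [p.HolderConjugate q] [s.HolderConjugate t] (hG : IsPartition G)
    (hα : ∀ i, α i ≠ 0) (β : Fin d → ℝ) {e γ : ℝ} (hγ : 0 ≤ γ) :
    ⨆ Δ : Fin d → ℝ, ENNReal.ofReal ((∑ k, Δ k * β k) ^ 2 - 2 * e * (∑ k, Δ k * β k) -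
        γ * (gnorm G (fun i => (α i)⁻¹) q t Δ) ^ 2) =
      ⨆ c : ℝ, ENNReal.ofReal (2 * (|e| * gnorm G α p s β) * |c| -
        (γ - gnorm G α p s β ^ 2) * c ^ 2) := by
  have : Fact (1 ≤ q) := ⟨ENNReal.HolderConjugate.one_le q p⟩
  have : Fact (1 ≤ t) := ⟨ENNReal.HolderConjugate.one_le t s⟩
  obtain ⟨Δ₀, hΔ₀, hΔ₀β⟩ :=
    exists_gnorm_le_one_sum_mul_eq (p := p) (q := q) (s := s) (t := t) hG hα β
  refine iSup_ofReal_sq_sub_eq_iSup_ofReal_abs hγ gnorm_nonneg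
    (fun Δ => (abs_sum_mul_le_gnorm_mul_gnorm hG hα Δ β).trans_eq (mul_comm _ _))
    fun c => ⟨c • Δ₀, ?_, ?_⟩
  · simp only [Pi.smul_apply, smul_eq_mul, mul_assoc, ← Finset.mul_sum, hΔ₀β]
  · rw [gnorm_smul]
    exact mul_le_of_le_one_right (abs_nonneg c) hΔ₀

theorem statement7_general {d dbar : ℕ}
    (G : Fin dbar → Finset (Fin d)) (hG : IsPartition G)
    (α : Fin dbar → ℝ) (hα : ∀ i, 0 < α i)
    (p q s t : ℝ≥0∞)
    (hpq : 1 / p + 1 / q = 1) (hst : 1 / s + 1 / t = 1)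
    (β : Fin d → ℝ) (e γ : ℝ) (hγ : 0 < γ) :
    ((gnorm G α p s β) ^ 2 < γ →
      ENNReal.ofReal (e ^ 2) +
          (⨆ Δ : Fin d → ℝ, ENNReal.ofReal
            ((∑ k, Δ k * β k) ^ 2 - 2 * e * (∑ k, Δ k * β k) -
              γ * (gnorm G (fun i => (α i)⁻¹) q t Δ) ^ 2))
        = ENNReal.ofReal (e ^ 2 * γ / (γ - (gnorm G α p s β) ^ 2))) ∧
    (γ < (gnorm G α p s β) ^ 2 →
      ENNReal.ofReal (e ^ 2) +
          (⨆ Δ : Fin d → ℝ, ENNReal.ofReal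
            ((∑ k, Δ k * β k) ^ 2 - 2 * e * (∑ k, Δ k * β k) -
              γ * (gnorm G (fun i => (α i)⁻¹) q t Δ) ^ 2))
        = ⊤) ∧
    (γ = (gnorm G α p s β) ^ 2 → e ≠ 0 →
      ENNReal.ofReal (e ^ 2) +
          (⨆ Δ : Fin d → ℝ, ENNReal.ofReal
            ((∑ k, Δ k * β k) ^ 2 - 2 * e * (∑ k, Δ k * β k) -
              γ * (gnorm G (fun i => (α i)⁻¹) q t Δ) ^ 2))
        = ⊤) := by
  have : p.HolderConjugate q := ENNReal.holderConjugate_iff.2 (by simpa only [one_div] using hpq)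
  have : s.HolderConjugate t := ENNReal.holderConjugate_iff.2 (by simpa only [one_div] using hst)
  have : Fact (1 ≤ s) := ⟨ENNReal.HolderConjugate.one_le s t⟩
  rw [iSup_ofReal_gnorm_eq (p := p) (q := q) (s := s) (t := t) hG (fun i => (hα i).ne') β hγ.le]
  set B := gnorm G α p s β
  have hB : 0 ≤ B := gnorm_nonneg β
  refine ⟨fun hlt => ?_, fun hgt => ?_, fun heq he => ?_⟩
  · have hk : 0 < γ - B ^ 2 := sub_pos.2 hlt
    rw [iSup_ofReal_two_mul_abs_sub_mul_sq_of_pos (by positivity) hk,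
      ← ENNReal.ofReal_add (sq_nonneg e) (by positivity)]
    congr 1
    rw [mul_pow, sq_abs, eq_div_iff hk.ne', add_mul, div_mul_cancel₀ _ hk.ne']
    ring
  · rw [iSup_ofReal_two_mul_abs_sub_mul_sq_of_neg (by positivity) (sub_neg.2 hgt), add_top]
  · have hB₀ : 0 < B := lt_of_le_of_ne hB fun h => by rw [← h] at heq; linarith
    rw [iSup_ofReal_two_mul_abs_sub_mul_sq_of_nonpos (by positivity) (sub_nonpos.2 heq.le),
      add_top]

theorem statement7 {d dbar : ℕ} (hd : 1 ≤ d)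
    (G : Fin dbar → Finset (Fin d)) (hG : IsPartition G)
    (α : Fin dbar → ℝ) (hα : ∀ i, 0 < α i)
    (p q s t : ℝ≥0∞) (hp : 1 ≤ p) (hq : 1 ≤ q) (hs : 1 ≤ s) (ht : 1 ≤ t)
    (hpq : 1 / p + 1 / q = 1) (hst : 1 / s + 1 / t = 1)
    (β : Fin d → ℝ) (hβ : β ≠ 0) (e γ : ℝ) (hγ : 0 < γ) :
    ((gnorm G α p s β) ^ 2 < γ →
      ENNReal.ofReal (e ^ 2) +
          (⨆ Δ : Fin d → ℝ, ENNReal.ofReal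
            ((∑ k, Δ k * β k) ^ 2 - 2 * e * (∑ k, Δ k * β k) -
              γ * (gnorm G (fun i => (α i)⁻¹) q t Δ) ^ 2))
        = ENNReal.ofReal (e ^ 2 * γ / (γ - (gnorm G α p s β) ^ 2))) ∧
    (γ < (gnorm G α p s β) ^ 2 →
      ENNReal.ofReal (e ^ 2) +
          (⨆ Δ : Fin d → ℝ, ENNReal.ofReal
            ((∑ k, Δ k * β k) ^ 2 - 2 * e * (∑ k, Δ k * β k) -
              γ * (gnorm G (fun i => (α i)⁻¹) q t Δ) ^ 2))
        = ⊤) ∧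
    (γ = (gnorm G α p s β) ^ 2 → e ≠ 0 →
      ENNReal.ofReal (e ^ 2) +
          (⨆ Δ : Fin d → ℝ, ENNReal.ofReal
            ((∑ k, Δ k * β k) ^ 2 - 2 * e * (∑ k, Δ k * β k) -
              γ * (gnorm G (fun i => (α i)⁻¹) q t Δ) ^ 2))
        = ⊤) :=
  statement7_general G hG α hα p q s t hpq hst β e γ hγ
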